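/- Let G and H be simple partially ordered abelian groups with order units u and v respectively, and suppose H has a unique state τ. Then every state s on the ordered group G ⊗ H (with order unit u ⊗ v) satisfies s(g ⊗ h) = s(g ⊗ v)·τ(h) for all g ∈ G and h ∈ H. -/
import Mathlib


/-- A state on a partially ordered abelian group with positive cone `P` and order unit
`u` is a positive additive homomorphism into `ℝ` normalized at `u`. -/
def IsState {G : Type*} [AddCommGroup G] (P : Set G) (u : G) (s : G →+ ℝ) : Prop :=
  (∀ x ∈ P, 0 ≤ s x) ∧ s u = 1

/-- The tensor product `s₁ ⊗ s₂ : G ⊗ H → ℝ` of two real-valued additive maps. -/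
noncomputable def tensorState {G H : Type*} [AddCommGroup G] [AddCommGroup H]
    (s : G →+ ℝ) (t : H →+ ℝ) : TensorProduct ℤ G H →+ ℝ :=
  ((LinearMap.mul' ℤ ℝ).comp
    (TensorProduct.map s.toIntLinearMap t.toIntLinearMap)).toAddMonoidHom

/-- The positive cone on `G ⊗ H`: `{0}` together with the elements on which every
tensor product of states is strictly positive. -/
def tensorCone {G H : Type*} [AddCommGroup G] [AddCommGroup H]
    (P : Set G) (u : G) (Q : Set H) (v : H) : Set (TensorProduct ℤ G H) :=
  {0} ∪ {x | ∀ s t, IsState P u s → IsState Q v t → 0 < tensorState s t x}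

lemma tensorState_tmul {G H : Type*} [AddCommGroup G] [AddCommGroup H]
    (s : G →+ ℝ) (t : H →+ ℝ) (g : G) (h : H) :
    tensorState s t (g ⊗ₜ[ℤ] h) = s g * t h := by
  simp [tensorState]

lemma state_pos {G : Type*} [AddCommGroup G] (P : Set G) (u : G)
    (hsimple : ∀ p ∈ P, p ≠ 0 → ∀ g : G, ∃ n : ℕ, n • p - g ∈ P)
    (s₁ : G →+ ℝ) (h : IsState P u s₁) {p : G} (hp : p ∈ P) (hp0 : p ≠ 0) :
    0 < s₁ p := by
  obtain ⟨n, hn⟩ := hsimple p hp hp0 u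
  have h1 : 0 ≤ s₁ (n • p - u) := h.1 _ hn
  rw [map_sub, map_nsmul, h.2] at h1
  have h0 : 0 ≤ s₁ p := h.1 p hp
  have : (n : ℝ) * s₁ p - 1 ≥ 0 := by simpa [nsmul_eq_mul] using h1
  nlinarith

/-- Let `G` and `H` be simple partially ordered abelian groups with order units `u` and
`v`, and suppose `H` has a unique state `τ`.  Then every state `s` on `G ⊗ H` (with the
cone defined via products of states and order unit `u ⊗ v`) satisfies
`s (g ⊗ h) = s (g ⊗ v) * τ h` for all `g ∈ G`, `h ∈ H`. -/
theorem stmt_4 {G H : Type*} [AddCommGroup G] [AddCommGroup H]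
    (P : Set G) (u : G) (Q : Set H) (v : H)
    (hP0 : (0 : G) ∈ P) (hPadd : ∀ x ∈ P, ∀ y ∈ P, x + y ∈ P)
    (hPpointed : ∀ x ∈ P, -x ∈ P → x = 0)
    (huP : u ∈ P) (hu : ∀ g : G, ∃ n : ℕ, n • u - g ∈ P)
    (hQ0 : (0 : H) ∈ Q) (hQadd : ∀ x ∈ Q, ∀ y ∈ Q, x + y ∈ Q)
    (hQpointed : ∀ x ∈ Q, -x ∈ Q → x = 0)
    (hvQ : v ∈ Q) (hv : ∀ h : H, ∃ n : ℕ, n • v - h ∈ Q)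
    -- simplicity: every nonzero positive element is an order unit
    (hGsimple : ∀ p ∈ P, p ≠ 0 → ∀ g : G, ∃ n : ℕ, n • p - g ∈ P)
    (hHsimple : ∀ q ∈ Q, q ≠ 0 → ∀ h : H, ∃ n : ℕ, n • q - h ∈ Q)
    -- H has a unique state τ
    (τ : H →+ ℝ) (hτ : IsState Q v τ) (hτuniq : ∀ σ : H →+ ℝ, IsState Q v σ → σ = τ)
    (s : TensorProduct ℤ G H →+ ℝ)
    (hs : IsState (tensorCone P u Q v) (u ⊗ₜ[ℤ] v) s) :
    ∀ (g : G) (h : H), s (g ⊗ₜ[ℤ] h) = s (g ⊗ₜ[ℤ] v) * τ h := by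
  classical
  obtain ⟨hsPos, hsNorm⟩ := hs
  -- membership of g ⊗ h in the cone for g positive nonzero, h positive
  have memCone : ∀ g ∈ P, g ≠ 0 → ∀ h ∈ Q, (g ⊗ₜ[ℤ] h) ∈ tensorCone P u Q v := by
    intro g hg hg0 h hh
    by_cases hh0 : h = 0
    · left; simp [hh0]
    · right
      intro s₁ t hs₁ ht
      rw [tensorState_tmul]
      exact mul_pos (state_pos P u hGsimple s₁ hs₁ hg hg0)
        (state_pos Q v hHsimple t ht hh hh0)
  -- key step: the identity for g positive nonzero
  have key : ∀ g ∈ P, g ≠ 0 → ∀ h : H, s (g ⊗ₜ[ℤ] h) = s (g ⊗ₜ[ℤ] v) * τ h := by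
    intro g hg hg0
    obtain ⟨n, hn⟩ := hGsimple g hg hg0 u
    -- (n+1) • (g ⊗ v) - u ⊗ v is in the cone
    have hcn : ((n + 1) • (g ⊗ₜ[ℤ] v) - u ⊗ₜ[ℤ] v) ∈ tensorCone P u Q v := by
      right
      intro s₁ t hs₁ ht
      have h1 : 0 < s₁ g := state_pos P u hGsimple s₁ hs₁ hg hg0
      have h2 : 0 ≤ s₁ (n • g - u) := hs₁.1 _ hn
      rw [map_sub, map_nsmul, hs₁.2] at h2
      have h2' : (n : ℝ) * s₁ g - 1 ≥ 0 := by simpa [nsmul_eq_mul] using h2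
      rw [map_sub, map_nsmul, tensorState_tmul, tensorState_tmul, hs₁.2, ht.2]
      have : ((n : ℝ) + 1) * (s₁ g * 1) - 1 * 1 > 0 := by nlinarith
      simpa [nsmul_eq_mul] using this
    have hge : 0 ≤ s ((n + 1) • (g ⊗ₜ[ℤ] v) - u ⊗ₜ[ℤ] v) := hsPos _ hcn
    rw [map_sub, map_nsmul, hsNorm] at hge
    have hge' : ((n : ℝ) + 1) * s (g ⊗ₜ[ℤ] v) - 1 ≥ 0 := by
      have := hge
      simpa [nsmul_eq_mul] using this
    have hgv0 : 0 ≤ s (g ⊗ₜ[ℤ] v) := hsPos _ (memCone g hg hg0 v hvQ)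
    have hgv : 0 < s (g ⊗ₜ[ℤ] v) := by nlinarith
    -- the induced state on H
    set c : ℝ := s (g ⊗ₜ[ℤ] v) with hc
    let σ : H →+ ℝ := AddMonoidHom.mk' (fun h => c⁻¹ * s (g ⊗ₜ[ℤ] h)) (by
      intro a b
      simp only [TensorProduct.tmul_add, map_add]
      ring)
    have hσ : IsState Q v σ := by
      constructor
      · intro q hq
        exact mul_nonneg (inv_nonneg.2 hgv.le) (hsPos _ (memCone g hg hg0 q hq))
      · show c⁻¹ * s (g ⊗ₜ[ℤ] v) = 1
        rw [← hc]
        exact inv_mul_cancel₀ hgv.ne'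
    intro h
    have hστ : σ h = τ h := by rw [hτuniq σ hσ]
    have : c⁻¹ * s (g ⊗ₜ[ℤ] h) = τ h := hστ
    field_simp at this
    linarith [this]
  -- general g : decompose as n • u - p with p ∈ P
  intro g h
  obtain ⟨n, hn⟩ := hu g
  set p : G := n • u - g with hp
  have hu0 : u ≠ 0 := by
    intro h0
    rw [h0, TensorProduct.zero_tmul] at hsNorm
    simp at hsNorm
  have keyu := key u huP hu0
  have keyp : ∀ h : H, s (p ⊗ₜ[ℤ] h) = s (p ⊗ₜ[ℤ] v) * τ h := by
    by_cases hp0 : p = 0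
    · intro h; simp [hp0, TensorProduct.zero_tmul]
    · exact key p hn hp0
  -- decomposition of s (g ⊗ h)
  have dec : ∀ h : H, s (g ⊗ₜ[ℤ] h) = (n : ℝ) * s (u ⊗ₜ[ℤ] h) - s (p ⊗ₜ[ℤ] h) := by
    intro h
    have hg_eq : g = n • u - p := by rw [hp]; abel
    have hnu : ((n • u : G) ⊗ₜ[ℤ] h) = (n : ℤ) • (u ⊗ₜ[ℤ] h) := by
      rw [← TensorProduct.smul_tmul', natCast_zsmul]
    calc s (g ⊗ₜ[ℤ] h) = s ((n • u - p) ⊗ₜ[ℤ] h) := by rw [← hg_eq]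
      _ = s ((n • u : G) ⊗ₜ[ℤ] h) - s (p ⊗ₜ[ℤ] h) := by
          rw [TensorProduct.sub_tmul, map_sub]
      _ = (n : ℝ) * s (u ⊗ₜ[ℤ] h) - s (p ⊗ₜ[ℤ] h) := by
          rw [hnu, map_zsmul, zsmul_eq_mul]
          push_cast
          ring
  rw [dec h, dec v, keyu h, keyp h]
  ring
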